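/- arXiv:1604.06791 — 2 statements merged into one kernel-verified Lean document; each statement's English description precedes it below -/
import Mathlib

section
/- Hölder bump estimate: let 0 < p < ∞, 0 < r < 1, and set s = (p+1)/(rp), s' = (p+1)/(p+1-rp), t = (p+1)/(rs') = (p+1-rp)/r. Then t > 1, and for any cube (or measurable set) B of finite positive measure, any weight σ, and any positive measurable f, (⨍_B σ^r)^{(p+1)/r} ≤ (⨍_B (f^p σ)^{1/t})^t · (⨍_B f^{-1}σ)^p. -/
open MeasureTheory Set ENNReal

/-! Split `σ ^ r = (f ^ p * σ) ^ (r / (p + 1)) * (f⁻¹ * σ) ^ (r * p / (p + 1))` pointwise and apply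
Hölder's inequality with the conjugate exponents `(p + 1) / (p + 1 - r * p)` and `(p + 1) / (r * p)`;
raising to the power `(p + 1) / r` turns these into the exponents `t` and `p`. Averages over `B` are
integrals against the rescaled measure `(volume B)⁻¹ • volume.restrict B`, so the estimate holds
for any measure. -/

theorem ENNReal.rpow_mul_inv_mul_rpow {x y : ℝ≥0∞} (hx0 : x ≠ 0) (hxt : x ≠ ∞) {p a : ℝ}
    (hp : 0 ≤ p) (ha : 0 ≤ a) :
    (x ^ p * y) ^ a * (x⁻¹ * y) ^ (p * a) = y ^ ((p + 1) * a) := by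
  have hxpa : x ^ (p * a) * (x ^ (p * a))⁻¹ = 1 :=
    ENNReal.mul_inv_cancel (rpow_pos_of_nonneg (pos_iff_ne_zero.2 hx0) (by positivity)).ne'
      (rpow_ne_top_of_nonneg (by positivity) hxt)
  rw [mul_rpow_of_nonneg _ _ ha, mul_rpow_of_nonneg _ _ (by positivity), ← rpow_mul,
    inv_rpow, mul_mul_mul_comm, hxpa, one_mul, ← rpow_add_of_nonneg _ _ ha (by positivity)]
  ring_nf

theorem ENNReal.lintegral_holder_bump {α : Type*} [MeasurableSpace α] (μ : Measure α)
    {σ f : α → ℝ≥0∞} (hσ : AEMeasurable σ μ) (hf : AEMeasurable f μ)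
    (hf0 : ∀ᵐ x ∂μ, f x ≠ 0) (hftop : ∀ᵐ x ∂μ, f x ≠ ∞)
    {p r : ℝ} (hp : 0 ≤ p) (hr : 0 < r) (hrp : r * p < p + 1) :
    (∫⁻ x, σ x ^ r ∂μ) ^ ((p + 1) / r)
      ≤ (∫⁻ x, (f x ^ p * σ x) ^ (r / (p + 1 - r * p)) ∂μ) ^ ((p + 1 - r * p) / r)
        * (∫⁻ x, (f x)⁻¹ * σ x ∂μ) ^ p := by
  have hq : 0 < p + 1 - r * p := by linarith
  have hsplit : ∀ᵐ x ∂μ, σ x ^ r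
      = ((f x ^ p * σ x) ^ (r / (p + 1 - r * p))) ^ ((p + 1 - r * p) / (p + 1))
        * ((f x)⁻¹ * σ x) ^ (r * p / (p + 1)) := by
    filter_upwards [hf0, hftop] with x hx0 hxt
    rw [← rpow_mul, show r / (p + 1 - r * p) * ((p + 1 - r * p) / (p + 1)) = r / (p + 1) by
        field_simp, show r * p / (p + 1) = p * (r / (p + 1)) by ring,
      ENNReal.rpow_mul_inv_mul_rpow hx0 hxt hp (by positivity), mul_div_cancel₀ _ (by positivity)]
  have holder : ∫⁻ x, σ x ^ r ∂μ
      ≤ (∫⁻ x, (f x ^ p * σ x) ^ (r / (p + 1 - r * p)) ∂μ) ^ ((p + 1 - r * p) / (p + 1))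
        * (∫⁻ x, (f x)⁻¹ * σ x ∂μ) ^ (r * p / (p + 1)) := by
    rw [lintegral_congr_ae hsplit]
    exact lintegral_mul_norm_pow_le (((hf.pow_const p).mul hσ).pow_const _) (hf.inv.mul hσ)
      (by positivity) (by positivity) (by field_simp; ring)
  calc (∫⁻ x, σ x ^ r ∂μ) ^ ((p + 1) / r)
      ≤ (_ * _) ^ ((p + 1) / r) := rpow_le_rpow holder (by positivity)
    _ = _ := by
      rw [mul_rpow_of_nonneg _ _ (by positivity), ← rpow_mul, ← rpow_mul]
      congr 2 <;> field_simp

theorem holder_bump_estimate_general (n : ℕ) (p r : ℝ) (hp : 0 < p)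
    (hr0 : 0 < r) (hr1 : r < 1)
    (B : Set (Fin n → ℝ))
    (σ f : (Fin n → ℝ) → ℝ) (hσm : Measurable σ)
    (hfm : Measurable f) (hfpos : ∀ x, 0 < f x) :
    1 < (p + 1 - r * p) / r ∧
      ((volume B)⁻¹ * ∫⁻ y in B, ENNReal.ofReal (σ y) ^ r) ^ ((p + 1) / r)
        ≤ ((volume B)⁻¹ * ∫⁻ y in B,
              (ENNReal.ofReal (f y) ^ p * ENNReal.ofReal (σ y)) ^ (r / (p + 1 - r * p)))
            ^ ((p + 1 - r * p) / r)
          * ((volume B)⁻¹ * ∫⁻ y in B,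
              (ENNReal.ofReal (f y))⁻¹ * ENNReal.ofReal (σ y)) ^ p := by
  refine ⟨by rw [lt_div_iff₀ hr0]; nlinarith, ?_⟩
  have bump := ENNReal.lintegral_holder_bump ((volume B)⁻¹ • volume.restrict B)
    hσm.ennreal_ofReal.aemeasurable hfm.ennreal_ofReal.aemeasurable
    (ae_of_all _ fun x => (ofReal_pos.2 (hfpos x)).ne') (ae_of_all _ fun _ => ofReal_ne_top)
    hp.le hr0 (by nlinarith)
  simpa only [lintegral_smul_measure, smul_eq_mul] using bump

/-- Hölder bump estimate: for `0 < p`, `0 < r < 1` and `t = (p+1-rp)/r`, one has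
`t > 1` and `(⨍_B σ^r)^{(p+1)/r} ≤ (⨍_B (f^p σ)^{1/t})^t · (⨍_B f^{-1}σ)^p`. -/
theorem holder_bump_estimate (n : ℕ) (p r : ℝ) (hp : 0 < p)
    (hr0 : 0 < r) (hr1 : r < 1)
    (B : Set (Fin n → ℝ)) (hB : MeasurableSet B)
    (h0 : 0 < volume B) (hfin : volume B < ⊤)
    (σ f : (Fin n → ℝ) → ℝ) (hσ0 : 0 ≤ σ) (hσm : Measurable σ)
    (hfm : Measurable f) (hfpos : ∀ x, 0 < f x) :
    1 < (p + 1 - r * p) / r ∧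
      ((volume B)⁻¹ * ∫⁻ y in B, ENNReal.ofReal (σ y) ^ r) ^ ((p + 1) / r)
        ≤ ((volume B)⁻¹ * ∫⁻ y in B,
              (ENNReal.ofReal (f y) ^ p * ENNReal.ofReal (σ y)) ^ (r / (p + 1 - r * p)))
            ^ ((p + 1 - r * p) / r)
          * ((volume B)⁻¹ * ∫⁻ y in B,
              (ENNReal.ofReal (f y))⁻¹ * ENNReal.ofReal (σ y)) ^ p :=
  holder_bump_estimate_general n p r hp hr0 hr1 B σ f hσm hfm hfpos
end

section
/- Two weight A_{-p} condition implies the dyadic testing condition: let 0 < p < ∞ and (u, σ) be a pair of weights such that ⨍_Q u ≤ C(⨍_Q σ)^{p+1} for all dyadic cubes Q. Then there is a constant C' such that ∫_Q (M^𝖣_{-1}(1_Q σ^{-1}))^p u ≤ C' ∫_Q σ for all dyadic cubes Q. -/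
open MeasureTheory Set ENNReal Filter

/-- A dyadic grid in `ℝⁿ`: every member is a half-open cube of sidelength `2^k`,
any two members are nested or disjoint, and for each `k` the cubes of
sidelength `2^k` cover `ℝⁿ`. -/
def IsDyadicGrid {n : ℕ} (𝒟 : Set (Set (Fin n → ℝ))) : Prop :=
  (∀ Q ∈ 𝒟, ∃ (k : ℤ) (a : Fin n → ℝ),
      Q = Set.univ.pi fun i => Set.Ico (a i) (a i + (2 : ℝ) ^ k)) ∧
  (∀ Q ∈ 𝒟, ∀ P ∈ 𝒟, Q ∩ P = ∅ ∨ Q ∩ P = Q ∨ Q ∩ P = P) ∧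
  (∀ (k : ℤ) (x : Fin n → ℝ), ∃ Q ∈ 𝒟, x ∈ Q ∧
      ∃ a : Fin n → ℝ, Q = Set.univ.pi fun i => Set.Ico (a i) (a i + (2 : ℝ) ^ k))

/-- The harmonic maximal operator over a family `𝓑`, applied to
`g : ℝⁿ → ℝ≥0∞`: `M₋₁^𝓑 g(x) = sup_{B ∈ 𝓑, x ∈ B} (⨍_B g⁻¹)⁻¹`, with the
conventions `1/0 = ∞`, `1/∞ = 0` built into `ℝ≥0∞`. -/
noncomputable def harmMax {n : ℕ} (𝓑 : Set (Set (Fin n → ℝ)))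
    (g : (Fin n → ℝ) → ℝ≥0∞) (x : Fin n → ℝ) : ℝ≥0∞ :=
  ⨆ (B ∈ 𝓑) (_ : x ∈ B), ((volume B)⁻¹ * ∫⁻ y in B, (g y)⁻¹)⁻¹

/-!
For `x ∈ Q` only the dyadic subcubes of `Q` matter: on a dyadic cube `B ⊋ Q` the function
`(1_Q σ⁻¹)⁻¹` is `∞` on the non-null set `B \ Q`, so `B` contributes `0` to the harmonic maximal
function. Let `c = (2 ⨍_Q σ)⁻¹`, which lies below the contribution of `Q` itself, so that
`M^p ≤ ∑_k (2^{k+1} c)^p 1_{E_k}` on `Q`, where `E_k` is the union of the maximal dyadic cubes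
`B ⊆ Q` with `(⨍_B σ)⁻¹ > 2^k c`. These cubes are pairwise disjoint, and on each of them the
`A_{-p}` condition gives `u(B) ≤ C (2^k c)^{-(p+1)} |B|`. Hence level `k` contributes at most
`2^p C |Q| (2^k c)⁻¹ = 2^{p+1-k} C σ(Q)`, and these sum to `4 · 2^p C σ(Q)`.
-/

def halfOpenCube {n : ℕ} (a : Fin n → ℝ) (r : ℝ) : Set (Fin n → ℝ) :=
  univ.pi fun i => Ico (a i) (a i + r)

namespace halfOpenCube

variable {n : ℕ} {a b : Fin n → ℝ} {r s : ℝ}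

theorem measurableSet : MeasurableSet (halfOpenCube a r) :=
  .univ_pi fun _ => measurableSet_Ico

theorem subset_iff (hr : 0 < r) :
    halfOpenCube a r ⊆ halfOpenCube b s ↔ ∀ i, b i ≤ a i ∧ a i + r ≤ b i + s := by
  rw [halfOpenCube, halfOpenCube, univ_pi_subset_univ_pi_iff]
  simp [Ico_subset_Ico_iff (lt_add_of_pos_right _ hr), Ico_eq_empty_iff, hr]

theorem volume_eq : volume (halfOpenCube a r) = ENNReal.ofReal r ^ n := by
  simp [halfOpenCube, Real.volume_pi_Ico]

theorem subset_Icc : halfOpenCube a r ⊆ Icc a (a + fun _ => r) := by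
  rw [← pi_univ_Icc]
  exact pi_mono fun i _ => Ico_subset_Icc_self

theorem interior_nonempty (hr : 0 < r) : (interior (halfOpenCube a r)).Nonempty := by
  rw [halfOpenCube, interior_pi_set finite_univ]
  simp [univ_pi_nonempty_iff, hr]

theorem nonempty (hr : 0 < r) : (halfOpenCube a r).Nonempty :=
  (interior_nonempty hr).mono interior_subset

theorem le_of_subset (hn : n ≠ 0) (hr : 0 < r) (h : halfOpenCube a r ⊆ halfOpenCube b s) :
    r ≤ s := by
  obtain ⟨hb, hab⟩ := (subset_iff hr).1 h ⟨0, Nat.pos_of_ne_zero hn⟩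
  linarith

theorem eq_of_subset (hr : 0 < r) (h : halfOpenCube a r ⊆ halfOpenCube b r) :
    halfOpenCube a r = halfOpenCube b r := by
  have hab : a = b := funext fun i => by
    obtain ⟨hb, hab⟩ := (subset_iff hr).1 h i
    linarith
  rw [hab]

end halfOpenCube

namespace IsDyadicGrid

variable {n : ℕ} {𝒟 : Set (Set (Fin n → ℝ))} {B P Q : Set (Fin n → ℝ)}

theorem exists_eq_halfOpenCube (hD : IsDyadicGrid 𝒟) (hB : B ∈ 𝒟) :
    ∃ (k : ℤ) (a : Fin n → ℝ), B = halfOpenCube a (2 ^ k) :=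
  hD.1 B hB

theorem measurableSet (hD : IsDyadicGrid 𝒟) (hB : B ∈ 𝒟) : MeasurableSet B := by
  obtain ⟨k, a, rfl⟩ := hD.exists_eq_halfOpenCube hB
  exact halfOpenCube.measurableSet

theorem volume_ne_zero (hD : IsDyadicGrid 𝒟) (hB : B ∈ 𝒟) : volume B ≠ 0 := by
  obtain ⟨k, a, rfl⟩ := hD.exists_eq_halfOpenCube hB
  simp [halfOpenCube.volume_eq, (zpow_pos (two_pos : (0 : ℝ) < 2) k).not_ge]

theorem volume_ne_top (hD : IsDyadicGrid 𝒟) (hB : B ∈ 𝒟) : volume B ≠ ⊤ := by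
  obtain ⟨k, a, rfl⟩ := hD.exists_eq_halfOpenCube hB
  simp [halfOpenCube.volume_eq]

theorem setLIntegral_ofReal_ne_top (hD : IsDyadicGrid 𝒟) (hB : B ∈ 𝒟)
    {w : (Fin n → ℝ) → ℝ} (hw : LocallyIntegrable w volume) :
    ∫⁻ y in B, ENNReal.ofReal (w y) ≠ ⊤ := by
  obtain ⟨k, a, rfl⟩ := hD.exists_eq_halfOpenCube hB
  exact ((hw.integrableOn_isCompact isCompact_Icc).mono_set
    halfOpenCube.subset_Icc).lintegral_lt_top.ne

theorem subset_or_subset (hD : IsDyadicGrid 𝒟) (hB : B ∈ 𝒟) (hP : P ∈ 𝒟)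
    (hBP : (B ∩ P).Nonempty) : B ⊆ P ∨ P ⊆ B := by
  rcases hD.2.1 B hB P hP with h | h | h
  · exact absurd h hBP.ne_empty
  · exact .inl (inter_eq_left.1 h)
  · exact .inr (inter_eq_right.1 h)

theorem exists_maximal_superset (hD : IsDyadicGrid 𝒟) (hQ : Q ∈ 𝒟)
    {p : Set (Fin n → ℝ) → Prop} (hp : ∀ B, p B → B ∈ 𝒟 ∧ B ⊆ Q) (hB : p B) :
    ∃ M, B ⊆ M ∧ Maximal p M := by
  obtain ⟨kB, aB, rfl⟩ := hD.exists_eq_halfOpenCube (hp B hB).1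
  rcases eq_or_ne n 0 with rfl | hn
  · refine ⟨_, subset_rfl, hB, fun M _ _ => ?_⟩
    rw [(halfOpenCube.nonempty (zpow_pos two_pos kB)).eq_univ]
    exact subset_univ M
  obtain ⟨kQ, aQ, rfl⟩ := hD.exists_eq_halfOpenCube hQ
  have scale_le {a b : Fin n → ℝ} {k k' : ℤ}
      (h : halfOpenCube a (2 ^ k) ⊆ halfOpenCube b (2 ^ k')) : k ≤ k' :=
    (zpow_le_zpow_iff_right₀ (one_lt_two : (1 : ℝ) < 2)).1
      (halfOpenCube.le_of_subset hn (zpow_pos two_pos k) h)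
  obtain ⟨k, ⟨a, hBa, hpa⟩, hk⟩ := Int.exists_greatest_of_bdd
    (P := fun k => ∃ a, halfOpenCube aB (2 ^ kB) ⊆ halfOpenCube a (2 ^ k) ∧
      p (halfOpenCube a (2 ^ k)))
    ⟨kQ, fun k ⟨a, _, hpa⟩ => scale_le (hp _ hpa).2⟩ ⟨kB, aB, subset_rfl, hB⟩
  refine ⟨_, hBa, hpa, fun M hpM hM => ?_⟩
  obtain ⟨k', a', rfl⟩ := hD.exists_eq_halfOpenCube (hp M hpM).1
  obtain rfl : k = k' := le_antisymm (scale_le hM) (hk k' ⟨a', hBa.trans hM, hpM⟩)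
  exact (halfOpenCube.eq_of_subset (zpow_pos two_pos k) hM).ge

theorem pairwiseDisjoint_maximal (hD : IsDyadicGrid 𝒟) {p : Set (Fin n → ℝ) → Prop}
    (hp : ∀ B, p B → B ∈ 𝒟) : {M | Maximal p M}.PairwiseDisjoint id := by
  intro M₁ h₁ M₂ h₂ hne
  by_contra hM
  rcases hD.subset_or_subset (hp _ h₁.prop) (hp _ h₂.prop)
    (not_disjoint_iff_nonempty_inter.1 hM) with h | h
  · exact hne (h₁.eq_of_subset h₂.prop h)
  · exact hne (h₂.eq_of_subset h₁.prop h).symm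

theorem countable_of_pairwiseDisjoint (hD : IsDyadicGrid 𝒟) {𝓜 : Set (Set (Fin n → ℝ))}
    (h𝓜 : 𝓜 ⊆ 𝒟) (hd : 𝓜.PairwiseDisjoint id) : 𝓜.Countable :=
  hd.countable_of_nonempty_interior fun B hB => by
    obtain ⟨k, a, rfl⟩ := hD.exists_eq_halfOpenCube (h𝓜 hB)
    exact halfOpenCube.interior_nonempty (zpow_pos two_pos k)

end IsDyadicGrid

section Measure

variable {X : Type*} [MeasurableSpace X] {μ : Measure X}

theorem setLIntegral_sUnion_le_mul_measure {𝓜 : Set (Set X)} {Q : Set X} {f : X → ℝ≥0∞}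
    {K : ℝ≥0∞} (hc : 𝓜.Countable) (hd : 𝓜.PairwiseDisjoint id)
    (hm : ∀ B ∈ 𝓜, MeasurableSet B) (hQ : ∀ B ∈ 𝓜, B ⊆ Q)
    (hf : ∀ B ∈ 𝓜, ∫⁻ x in B, f x ∂μ ≤ K * μ B) :
    ∫⁻ x in ⋃₀ 𝓜, f x ∂μ ≤ K * μ Q := by
  rw [sUnion_eq_biUnion, lintegral_biUnion hc hm hd]
  calc ∑' B : 𝓜, ∫⁻ x in B, f x ∂μ ≤ ∑' B : 𝓜, K * μ B :=
        ENNReal.tsum_le_tsum fun B => hf B B.2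
    _ = K * μ (⋃₀ 𝓜) := by rw [ENNReal.tsum_mul_left, measure_sUnion hc hd hm]
    _ ≤ K * μ Q := by gcongr; exact sUnion_subset hQ

theorem setLIntegral_mul_le_tsum {Q : Set X} (hQ : MeasurableSet Q) {f u : X → ℝ≥0∞}
    (hu : AEMeasurable u μ) {E : ℕ → Set X} (hE : ∀ k, MeasurableSet (E k)) {c : ℕ → ℝ≥0∞}
    (hf : ∀ x ∈ Q, f x ≤ ∑' k, (E k).indicator (fun _ => c k) x) :
    ∫⁻ x in Q, f x * u x ∂μ ≤ ∑' k, c k * ∫⁻ x in E k, u x ∂μ :=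
  calc ∫⁻ x in Q, f x * u x ∂μ
      ≤ ∫⁻ x in Q, ∑' k, (E k).indicator (fun x => c k * u x) x ∂μ := by
        refine setLIntegral_mono' hQ fun x hx => ?_
        simp_rw [indicator_mul_left, ENNReal.tsum_mul_right]
        exact mul_le_mul_left (hf x hx) _
    _ ≤ ∫⁻ x, ∑' k, (E k).indicator (fun x => c k * u x) x ∂μ := setLIntegral_le_lintegral _ _
    _ = ∑' k, c k * ∫⁻ x in E k, u x ∂μ := by
        rw [lintegral_tsum fun k => (hu.const_mul _).indicator (hE k)]
        simp_rw [lintegral_indicator (hE _), lintegral_const_mul'' _ hu.restrict]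

theorem inv_setLAverage_indicator_le {B Q : Set X} (hB : MeasurableSet B)
    (hQ : MeasurableSet Q) (hQB : Q ⊆ B) (hμB : μ B ≠ ⊤) (g : X → ℝ≥0∞) :
    ((μ B)⁻¹ * ∫⁻ y in B, (Q.indicator g y)⁻¹ ∂μ)⁻¹ ≤ ((μ Q)⁻¹ * ∫⁻ y in Q, (g y)⁻¹ ∂μ)⁻¹ := by
  have on_Q : ∫⁻ y in Q, (Q.indicator g y)⁻¹ ∂μ = ∫⁻ y in Q, (g y)⁻¹ ∂μ :=
    setLIntegral_congr_fun hQ fun y hy => by rw [indicator_of_mem hy]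
  by_cases hBQ : μ (B \ Q) = 0
  · have hae : B =ᵐ[μ] Q := ae_eq_set.2 ⟨hBQ, by rw [sdiff_eq_empty.2 hQB, measure_empty]⟩
    rw [measure_congr hae, setLIntegral_congr hae, on_Q]
  have : ∫⁻ y in B, (Q.indicator g y)⁻¹ ∂μ = ⊤ := by
    refine eq_top_iff.2 (le_trans ?_ (lintegral_mono_set (sdiff_subset (t := Q))))
    rw [setLIntegral_congr_fun (hB.diff hQ) fun y hy => by
      rw [indicator_of_notMem hy.2, ENNReal.inv_zero], setLIntegral_const, ENNReal.top_mul hBQ]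
  rw [this, ENNReal.mul_top (ENNReal.inv_ne_zero.2 hμB), ENNReal.inv_top]
  exact zero_le

theorem setLIntegral_mul_eq_zero_of_setLIntegral_eq_zero {Q : Set X} {f u : X → ℝ≥0∞}
    (hu : AEMeasurable u (μ.restrict Q)) (h : ∫⁻ x in Q, u x ∂μ = 0) :
    ∫⁻ x in Q, f x * u x ∂μ = 0 := by
  rw [← lintegral_zero]
  exact lintegral_congr_ae <| ((lintegral_eq_zero_iff' hu).1 h).mono fun x hx => by
    simp [hx]

end Measure

namespace ENNReal

variable {c t F : ℝ≥0∞} {p : ℝ}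

theorem rpow_le_tsum_indicator {X : Type*} (hp : 0 ≤ p) (hc : c ≠ 0) (hcF : c < F)
    {E : ℕ → Set X} {x : X} (hE : ∀ k, 2 ^ k * c < F → x ∈ E k) :
    F ^ p ≤ ∑' k, (E k).indicator (fun _ => (2 ^ (k + 1) * c) ^ p) x := by
  classical
  by_cases hF : ∃ m : ℕ, F ≤ 2 ^ (m + 1) * c
  · set m := Nat.find hF
    have hxm : x ∈ E m := hE m <| by
      cases hm : m with
      | zero => simpa using hcF
      | succ k => exact not_le.1 (Nat.find_min hF (by omega : k < m))
    calc F ^ p ≤ (2 ^ (m + 1) * c) ^ p := rpow_le_rpow (Nat.find_spec hF) hp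
      _ = (E m).indicator (fun _ => (2 ^ (m + 1) * c) ^ p) x :=
          (indicator_of_mem hxm fun _ => (2 ^ (m + 1) * c) ^ p).symm
      _ ≤ _ := ENNReal.le_tsum m
  · simp only [not_exists, not_le] at hF
    have hxE (k : ℕ) : x ∈ E k :=
      hE k <| lt_of_le_of_lt (mul_le_mul_left (pow_le_pow_right₀ one_le_two k.le_succ) c) (hF k)
    calc F ^ p ≤ ∑' _ : ℕ, (2 * c) ^ p := by
          rw [tsum_const_eq_top_of_ne_zero (by simp [rpow_eq_zero_iff, hc, hp.not_gt])]
          exact le_top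
      _ ≤ _ := ENNReal.tsum_le_tsum fun k => by
          rw [indicator_of_mem (hxE k)]
          gcongr
          exact le_self_pow₀ one_le_two k.succ_ne_zero

theorem rpow_mul_inv_rpow_add_one (ht0 : t ≠ 0) (ht : t ≠ ⊤) : t ^ p * t⁻¹ ^ (p + 1) = t⁻¹ := by
  rw [rpow_add _ _ (ENNReal.inv_ne_zero.2 ht) (inv_ne_top.2 ht0), rpow_one, inv_rpow, ← mul_assoc,
    ENNReal.mul_inv_cancel (by simp [rpow_eq_zero_iff, ht0, ht])
      (by simp [rpow_eq_top_iff, ht0, ht]), one_mul]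

theorem tsum_two_pow_rpow_mul_inv_rpow (hc0 : c ≠ 0) (hc : c ≠ ⊤) (K : ℝ≥0∞) :
    ∑' k : ℕ, (2 ^ (k + 1) * c) ^ p * (K * ((2 ^ k * c)⁻¹) ^ (p + 1))
      = 2 * 2 ^ p * K * c⁻¹ := by
  have term (k : ℕ) : (2 ^ (k + 1) * c) ^ p * (K * ((2 ^ k * c)⁻¹) ^ (p + 1))
      = 2 ^ p * K * c⁻¹ * 2⁻¹ ^ k := by
    have ht0 : 2 ^ k * c ≠ 0 := mul_ne_zero (by simp) hc0
    have ht : 2 ^ k * c ≠ ⊤ := mul_ne_top (by simp) hc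
    rw [pow_succ', mul_assoc, mul_rpow_of_ne_top ofNat_ne_top ht, mul_mul_mul_comm,
      rpow_mul_inv_rpow_add_one ht0 ht, ENNReal.mul_inv (by simp) (by simp), ← ENNReal.inv_pow]
    ring
  simp_rw [term, ENNReal.tsum_mul_left, ENNReal.tsum_geometric_two]
  ring

end ENNReal

theorem le_harmMax {n : ℕ} {𝓑 : Set (Set (Fin n → ℝ))} {B : Set (Fin n → ℝ)} (hB : B ∈ 𝓑)
    (g : (Fin n → ℝ) → ℝ≥0∞) {x : Fin n → ℝ} (hx : x ∈ B) :
    ((volume B)⁻¹ * ∫⁻ y in B, (g y)⁻¹)⁻¹ ≤ harmMax 𝓑 g x :=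
  le_iSup₂_of_le (f := fun B _ => ⨆ _ : x ∈ B, ((volume B)⁻¹ * ∫⁻ y in B, (g y)⁻¹)⁻¹)
    B hB (le_iSup_of_le hx le_rfl)

def stoppingCubes {n : ℕ} (𝒟 : Set (Set (Fin n → ℝ))) (Q : Set (Fin n → ℝ))
    (w : (Fin n → ℝ) → ℝ≥0∞) (t : ℝ≥0∞) : Set (Set (Fin n → ℝ)) :=
  {M | Maximal (fun B => B ∈ 𝒟 ∧ B ⊆ Q ∧ t < ((volume B)⁻¹ * ∫⁻ y in B, w y)⁻¹) M}

theorem of_mem_stoppingCubes {n : ℕ} {𝒟 : Set (Set (Fin n → ℝ))} {Q M : Set (Fin n → ℝ)}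
    {w : (Fin n → ℝ) → ℝ≥0∞} {t : ℝ≥0∞} (hM : M ∈ stoppingCubes 𝒟 Q w t) :
    M ∈ 𝒟 ∧ M ⊆ Q ∧ t < ((volume M)⁻¹ * ∫⁻ y in M, w y)⁻¹ :=
  hM.1

namespace IsDyadicGrid

variable {n : ℕ} {𝒟 : Set (Set (Fin n → ℝ))} {Q : Set (Fin n → ℝ)}

theorem harmMax_indicator_le (hD : IsDyadicGrid 𝒟) (hQ : Q ∈ 𝒟) (g : (Fin n → ℝ) → ℝ≥0∞)
    {x : Fin n → ℝ} (hx : x ∈ Q) :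
    harmMax 𝒟 (Q.indicator g) x ≤ harmMax {B ∈ 𝒟 | B ⊆ Q} g x := by
  have hQQ : Q ∈ {B ∈ 𝒟 | B ⊆ Q} := ⟨hQ, subset_rfl⟩
  refine iSup₂_le fun B hB => iSup_le fun hxB => ?_
  rcases hD.subset_or_subset hB hQ ⟨x, hxB, hx⟩ with hBQ | hQB
  · rw [setLIntegral_congr_fun (hD.measurableSet hB) fun y hy => by
      rw [indicator_of_mem (hBQ hy)]]
    exact le_harmMax (mem_sep hB hBQ) g hxB
  · exact (inv_setLAverage_indicator_le (hD.measurableSet hB) (hD.measurableSet hQ) hQB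
      (hD.volume_ne_top hB) g).trans (le_harmMax hQQ g hx)

variable {w : (Fin n → ℝ) → ℝ≥0∞} {t : ℝ≥0∞}

theorem mem_sUnion_stoppingCubes (hD : IsDyadicGrid 𝒟) (hQ : Q ∈ 𝒟) {x : Fin n → ℝ}
    (hx : t < harmMax {B ∈ 𝒟 | B ⊆ Q} (fun y => (w y)⁻¹) x) :
    x ∈ ⋃₀ stoppingCubes 𝒟 Q w t := by
  simp only [harmMax, inv_inv, lt_iSup_iff] at hx
  obtain ⟨B, ⟨hB, hBQ⟩, hxB, htB⟩ := hx
  obtain ⟨M, hBM, hM⟩ : ∃ M, B ⊆ M ∧ M ∈ stoppingCubes 𝒟 Q w t :=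
    hD.exists_maximal_superset hQ (fun _ hB => ⟨hB.1, hB.2.1⟩) ⟨hB, hBQ, htB⟩
  exact ⟨M, hM, hBM hxB⟩

theorem pairwiseDisjoint_stoppingCubes (hD : IsDyadicGrid 𝒟) :
    (stoppingCubes 𝒟 Q w t).PairwiseDisjoint id :=
  hD.pairwiseDisjoint_maximal fun _ hB => hB.1

theorem countable_stoppingCubes (hD : IsDyadicGrid 𝒟) : (stoppingCubes 𝒟 Q w t).Countable :=
  hD.countable_of_pairwiseDisjoint (fun _ hM => (of_mem_stoppingCubes hM).1)
    hD.pairwiseDisjoint_stoppingCubes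

theorem measurableSet_sUnion_stoppingCubes (hD : IsDyadicGrid 𝒟) :
    MeasurableSet (⋃₀ stoppingCubes 𝒟 Q w t) :=
  .sUnion hD.countable_stoppingCubes fun _ hM => hD.measurableSet (of_mem_stoppingCubes hM).1

theorem setLIntegral_sUnion_stoppingCubes_le (hD : IsDyadicGrid 𝒟) {q : ℝ} (hq : 0 ≤ q)
    {C : ℝ≥0∞} {u : (Fin n → ℝ) → ℝ≥0∞}
    (hA : ∀ B ∈ 𝒟, (volume B)⁻¹ * ∫⁻ y in B, u y
        ≤ C * ((volume B)⁻¹ * ∫⁻ y in B, w y) ^ q) :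
    ∫⁻ x in ⋃₀ stoppingCubes 𝒟 Q w t, u x ≤ C * t⁻¹ ^ q * volume Q := by
  refine setLIntegral_sUnion_le_mul_measure hD.countable_stoppingCubes
    hD.pairwiseDisjoint_stoppingCubes (fun _ hM => hD.measurableSet (of_mem_stoppingCubes hM).1)
    (fun _ hM => (of_mem_stoppingCubes hM).2.1) fun B hM => ?_
  obtain ⟨hB, -, htB⟩ := of_mem_stoppingCubes hM
  calc ∫⁻ y in B, u y = volume B * ((volume B)⁻¹ * ∫⁻ y in B, u y) := by
        rw [← mul_assoc, ENNReal.mul_inv_cancel (hD.volume_ne_zero hB) (hD.volume_ne_top hB),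
          one_mul]
    _ ≤ volume B * (C * t⁻¹ ^ q) := by
        refine mul_le_mul_right ((hA B hB).trans ?_) _
        gcongr
        exact (ENNReal.lt_inv_iff_lt_inv.1 htB).le
    _ = C * t⁻¹ ^ q * volume B := mul_comm _ _

theorem setLIntegral_harmMax_rpow_mul_le_tsum (hD : IsDyadicGrid 𝒟) (hQ : Q ∈ 𝒟) {p : ℝ}
    (hp : 0 ≤ p) {u : (Fin n → ℝ) → ℝ≥0∞} (hu : AEMeasurable u) {c : ℝ≥0∞} (hc : c ≠ 0)
    (hcQ : c < ((volume Q)⁻¹ * ∫⁻ y in Q, w y)⁻¹) :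
    ∫⁻ x in Q, harmMax 𝒟 (Q.indicator fun y => (w y)⁻¹) x ^ p * u x
      ≤ ∑' k : ℕ, (2 ^ (k + 1) * c) ^ p * ∫⁻ x in ⋃₀ stoppingCubes 𝒟 Q w (2 ^ k * c), u x := by
  have hQQ : Q ∈ {B ∈ 𝒟 | B ⊆ Q} := ⟨hQ, subset_rfl⟩
  have hcF (x) (hx : x ∈ Q) : c < harmMax {B ∈ 𝒟 | B ⊆ Q} (fun y => (w y)⁻¹) x :=
    hcQ.trans_le (by simpa only [inv_inv] using le_harmMax hQQ (fun y => (w y)⁻¹) hx)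
  calc _ ≤ ∫⁻ x in Q, harmMax {B ∈ 𝒟 | B ⊆ Q} (fun y => (w y)⁻¹) x ^ p * u x :=
        setLIntegral_mono' (hD.measurableSet hQ) fun x hx => by
          gcongr
          exact hD.harmMax_indicator_le hQ _ hx
    _ ≤ _ := setLIntegral_mul_le_tsum (hD.measurableSet hQ) hu
        (fun _ => hD.measurableSet_sUnion_stoppingCubes) fun x hx =>
        ENNReal.rpow_le_tsum_indicator hp hc (hcF x hx) fun _ hk =>
          hD.mem_sUnion_stoppingCubes hQ hk

theorem setLIntegral_harmMax_rpow_mul_le (hD : IsDyadicGrid 𝒟) (hQ : Q ∈ 𝒟) {p : ℝ}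
    (hp : 0 ≤ p) {C : ℝ≥0∞} {u : (Fin n → ℝ) → ℝ≥0∞} (hu : AEMeasurable u)
    (hw : ∫⁻ y in Q, w y ≠ ⊤)
    (hA : ∀ B ∈ 𝒟, (volume B)⁻¹ * ∫⁻ y in B, u y
        ≤ C * ((volume B)⁻¹ * ∫⁻ y in B, w y) ^ (p + 1)) :
    ∫⁻ x in Q, harmMax 𝒟 (Q.indicator fun y => (w y)⁻¹) x ^ p * u x
      ≤ 4 * 2 ^ p * C * ∫⁻ y in Q, w y := by
  have hV0 := hD.volume_ne_zero hQ
  have hV := hD.volume_ne_top hQ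
  have hAQ := hA Q hQ
  set W := ∫⁻ y in Q, w y
  rcases eq_or_ne W 0 with hW0 | hW0
  · rw [hW0, mul_zero, ENNReal.zero_rpow_of_pos (by linarith), mul_zero, nonpos_iff_eq_zero,
      mul_eq_zero, or_iff_right (ENNReal.inv_ne_zero.2 hV)] at hAQ
    rw [setLIntegral_mul_eq_zero_of_setLIntegral_eq_zero hu.restrict hAQ]
    exact zero_le
  set a := (volume Q)⁻¹ * W
  have ha0 : a ≠ 0 := mul_ne_zero (ENNReal.inv_ne_zero.2 hV) hW0
  have ha : a ≠ ⊤ := ENNReal.mul_ne_top (ENNReal.inv_ne_top.2 hV0) hw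
  set c := (2 * a)⁻¹
  have hc0 : c ≠ 0 := ENNReal.inv_ne_zero.2 (ENNReal.mul_ne_top ofNat_ne_top ha)
  have hc : c ≠ ⊤ := by simp [c, ha0]
  have hcQ : c < a⁻¹ :=
    ENNReal.inv_lt_inv.2 (by rw [two_mul]; exact ENNReal.lt_add_right ha ha0)
  calc _ ≤ ∑' k : ℕ, (2 ^ (k + 1) * c) ^ p
          * ∫⁻ x in ⋃₀ stoppingCubes 𝒟 Q w (2 ^ k * c), u x :=
        hD.setLIntegral_harmMax_rpow_mul_le_tsum hQ hp hu hc0 hcQ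
    _ ≤ ∑' k : ℕ, (2 ^ (k + 1) * c) ^ p * (C * volume Q * ((2 ^ k * c)⁻¹) ^ (p + 1)) := by
        gcongr with k
        rw [mul_right_comm]
        exact hD.setLIntegral_sUnion_stoppingCubes_le (by linarith) hA
    _ = 4 * 2 ^ p * C * W := by
        rw [ENNReal.tsum_two_pow_rpow_mul_inv_rpow hc0 hc, inv_inv, ← one_mul W,
          ← ENNReal.mul_inv_cancel hV0 hV]
        ring

end IsDyadicGrid

theorem dyadic_Ap_implies_testing_general (n : ℕ) (𝒟 : Set (Set (Fin n → ℝ)))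
    (hD : IsDyadicGrid 𝒟) (p : ℝ) (hp : 0 < p)
    (u σ : (Fin n → ℝ) → ℝ)
    (hu : LocallyIntegrable u volume) (hσ : LocallyIntegrable σ volume)
    (C : ℝ≥0∞) (hC : C ≠ ⊤)
    (hA : ∀ Q ∈ 𝒟, (volume Q)⁻¹ * ∫⁻ y in Q, ENNReal.ofReal (u y)
        ≤ C * ((volume Q)⁻¹ * ∫⁻ y in Q, ENNReal.ofReal (σ y)) ^ (p + 1)) :
    ∃ C' : ℝ≥0∞, C' ≠ ⊤ ∧ ∀ Q ∈ 𝒟,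
      ∫⁻ x in Q,
          (harmMax 𝒟 (Q.indicator fun y => (ENNReal.ofReal (σ y))⁻¹) x) ^ p
            * ENNReal.ofReal (u x)
        ≤ C' * ∫⁻ y in Q, ENNReal.ofReal (σ y) :=
  ⟨4 * 2 ^ p * C, by finiteness, fun Q hQ =>
    hD.setLIntegral_harmMax_rpow_mul_le hQ hp.le
      hu.aestronglyMeasurable.aemeasurable.ennreal_ofReal (hD.setLIntegral_ofReal_ne_top hQ hσ) hA⟩

/-- The two-weight `A_{-p}` condition `⨍_Q u ≤ C (⨍_Q σ)^{p+1}` over a dyadic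
grid implies the dyadic testing condition for the harmonic maximal operator. -/
theorem dyadic_Ap_implies_testing (n : ℕ) (𝒟 : Set (Set (Fin n → ℝ)))
    (hD : IsDyadicGrid 𝒟) (p : ℝ) (hp : 0 < p)
    (u σ : (Fin n → ℝ) → ℝ) (hu0 : 0 ≤ u) (hσ0 : 0 ≤ σ)
    (hu : LocallyIntegrable u volume) (hσ : LocallyIntegrable σ volume)
    (C : ℝ≥0∞) (hC : C ≠ ⊤)
    (hA : ∀ Q ∈ 𝒟, (volume Q)⁻¹ * ∫⁻ y in Q, ENNReal.ofReal (u y)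
        ≤ C * ((volume Q)⁻¹ * ∫⁻ y in Q, ENNReal.ofReal (σ y)) ^ (p + 1)) :
    ∃ C' : ℝ≥0∞, C' ≠ ⊤ ∧ ∀ Q ∈ 𝒟,
      ∫⁻ x in Q,
          (harmMax 𝒟 (Q.indicator fun y => (ENNReal.ofReal (σ y))⁻¹) x) ^ p
            * ENNReal.ofReal (u x)
        ≤ C' * ∫⁻ y in Q, ENNReal.ofReal (σ y) :=
  dyadic_Ap_implies_testing_general n 𝒟 hD p hp u σ hu hσ C hC hA
end
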